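/- Let α ∈ ℝ, z = e^{iα}, and N ≥ 1. The matrix B_{α,N}, with rows indexed by J : Fin N → Fin 2 and columns indexed by triples (N0,N1,N2) of nonnegative integers with N0+N1+N2 = N, and with (J,(N0,N1,N2)) entry ∑_{L ∈ [N0,N1,N2]} ∏_{p<N} (A'_α)_{J(p),L(p)}, has rank N+1. -/

import Mathlib

open Complex Finset

/-- The matrix `A'_α` with rows `(1, 0, -e^{2iα})` and `(0, 1, e^{iα})`. -/
noncomputable def Amat' (α : ℝ) : Matrix (Fin 2) (Fin 3) ℂ :=
  !![1, 0, -Complex.exp (α * Complex.I) ^ 2;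
     0, 1, Complex.exp (α * Complex.I)]

/-- The number of coordinates of `L` equal to `i`. -/
def cnt {N : ℕ} (L : Fin N → Fin 3) (i : Fin 3) : ℕ :=
  (Finset.univ.filter fun p => L p = i).card

/-- Triples `(N0, N1, N2)` of nonnegative integers with `N0 + N1 + N2 = N`. -/
def Triple (N : ℕ) : Type := {t : ℕ × ℕ × ℕ // t.1 + t.2.1 + t.2.2 = N}

noncomputable instance (N : ℕ) : Fintype (Triple N) :=
  Fintype.ofInjective
    (fun t : Triple N =>
      ((⟨t.1.1, by have := t.2; omega⟩ : Fin (N + 1)),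
       (⟨t.1.2.1, by have := t.2; omega⟩ : Fin (N + 1)),
       (⟨t.1.2.2, by have := t.2; omega⟩ : Fin (N + 1))))
    (by
      rintro ⟨⟨a, b, c⟩, h⟩ ⟨⟨a', b', c'⟩, h'⟩ heq
      simp only [Prod.mk.injEq, Fin.mk.injEq] at heq
      exact Subtype.ext (by simp only [Prod.mk.injEq]; exact ⟨heq.1, heq.2.1, heq.2.2⟩))

/-- The matrix `B_{α,N}` with rows indexed by binary words of length `N` and
columns indexed by triples `(N0,N1,N2)` with `N0 + N1 + N2 = N`. -/
noncomputable def Bmat (α : ℝ) (N : ℕ) : Matrix (Fin N → Fin 2) (Triple N) ℂ :=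
  fun J t =>
    ∑ L ∈ Finset.univ.filter
        (fun L : Fin N → Fin 3 =>
          cnt L 0 = t.1.1 ∧ cnt L 1 = t.1.2.1 ∧ cnt L 2 = t.1.2.2),
      ∏ p : Fin N, Amat' α (J p) (L p)

/-!
Every entry of `Bmat α N` is unchanged when the positions of the word `J` are permuted, so the
row of `J` is the row of the word `1…10…0` with as many ones as `J`: there are at most `N + 1`
distinct rows. Conversely, the first two columns of `A'_α` form the identity matrix, so on the
columns `(N - m, m, 0)` the only contributing `L` is `J` itself, read in `Fin 3`; hence the entry
is `1` if `J` has `m` ones and `0` otherwise, and these rows and columns give an identity submatrix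
of size `N + 1`.
-/

theorem exists_perm_comp_eq_of_card_fiber_eq {ι β : Type*} [Fintype ι] [DecidableEq β]
    {f g : ι → β} (h : ∀ c, #{i | f i = c} = #{i | g i = c}) :
    ∃ σ : Equiv.Perm ι, g ∘ σ = f :=
  ⟨Equiv.ofFiberEquiv fun c => Fintype.equivOfCardEq (by
      rw [Fintype.card_subtype, Fintype.card_subtype, h c]),
    funext (Equiv.ofFiberEquiv_map _)⟩

namespace Matrix

variable {m n ι R : Type*} [Fintype ι]

theorem rank_le_card_of_forall_row_eq [Field R] [Finite m] [Fintype n] (A : Matrix m n R) (r : ι → m)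
    (h : ∀ i, ∃ k, A (r k) = A i) : A.rank ≤ Fintype.card ι := by
  rw [A.rank_eq_finrank_span_row]
  calc Module.finrank R (Submodule.span R (Set.range A.row))
      ≤ Module.finrank R (Submodule.span R (Set.range (A.row ∘ r))) :=
        Submodule.finrank_mono <| Submodule.span_mono <| by
          rintro _ ⟨i, rfl⟩
          exact h i
    _ ≤ Fintype.card ι := finrank_range_le_card _

theorem card_le_rank_of_submatrix_eq_one [CommSemiring R] [StrongRankCondition R] [Fintype n]
    [DecidableEq ι] (A : Matrix m n R) (r : ι → m) (c : ι → n) (h : A.submatrix r c = 1) :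
    Fintype.card ι ≤ A.rank := by
  simpa [h] using A.rank_submatrix_le r c

end Matrix

theorem card_fiber_zero_add_card_fiber_one {ι : Type*} [Fintype ι] (J : ι → Fin 2) :
    #{i | J i = 0} + #{i | J i = 1} = Fintype.card ι := by
  simpa using (Finset.card_eq_sum_card_fiberwise (f := J) (s := univ) (t := univ) (by simp)).symm

def onesPrefix (N k : ℕ) : Fin N → Fin 2 := fun p => if (p : ℕ) < k then 1 else 0

theorem card_onesPrefix_eq_one {N k : ℕ} (hk : k ≤ N) : #{p | onesPrefix N k p = 1} = k := by
  simpa [onesPrefix, hk] using Fin.card_filter_val_lt (n := N) (m := k)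

theorem cnt_comp_perm {N : ℕ} (L : Fin N → Fin 3) (σ : Equiv.Perm (Fin N)) (i : Fin 3) :
    cnt (L ∘ σ) i = cnt L i := by
  simp only [cnt, Finset.card_filter]
  exact Equiv.sum_comp σ fun p => if L p = i then 1 else 0

theorem Bmat_comp_perm (α : ℝ) {N : ℕ} (J : Fin N → Fin 2) (σ : Equiv.Perm (Fin N)) :
    Bmat α N (J ∘ σ) = Bmat α N J := by
  ext t
  simp only [Bmat, Finset.sum_filter]
  refine Fintype.sum_equiv (σ.arrowCongr (Equiv.refl (Fin 3))) _ _ fun L => ?_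
  have hL : σ.arrowCongr (Equiv.refl (Fin 3)) L = L ∘ σ.symm := rfl
  rw [hL, cnt_comp_perm, cnt_comp_perm, cnt_comp_perm,
    ← Equiv.prod_comp σ fun p => Amat' α (J p) ((L ∘ σ.symm) p)]
  simp

theorem Bmat_eq_onesPrefix (α : ℝ) {N : ℕ} (J : Fin N → Fin 2) :
    Bmat α N (onesPrefix N #{p | J p = 1}) = Bmat α N J := by
  have hk : #{p | J p = 1} ≤ N := (card_filter_le _ _).trans_eq (card_fin N)
  have hJ := card_fiber_zero_add_card_fiber_one J
  have hP := card_fiber_zero_add_card_fiber_one (onesPrefix N #{p | J p = 1})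
  have hP1 := card_onesPrefix_eq_one hk
  rw [Fintype.card_fin] at hJ hP
  obtain ⟨σ, hσ⟩ := exists_perm_comp_eq_of_card_fiber_eq (f := J)
    (g := onesPrefix N #{p | J p = 1}) (by
      intro c
      fin_cases c <;> simp only [Fin.zero_eta, Fin.mk_one] <;> omega)
  rw [← Bmat_comp_perm α _ σ, hσ]

theorem Amat'_eq_ite (α : ℝ) (j : Fin 2) {l : Fin 3} (hl : l ≠ 2) :
    Amat' α j l = if l = j.castSucc then 1 else 0 := by
  fin_cases j <;> fin_cases l <;> simp_all [Amat']

theorem cnt_castSucc_comp {N : ℕ} (J : Fin N → Fin 2) (j : Fin 2) :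
    cnt (Fin.castSucc ∘ J) j.castSucc = #{p | J p = j} := by
  simp [cnt]

theorem cnt_castSucc_comp_two {N : ℕ} (J : Fin N → Fin 2) : cnt (Fin.castSucc ∘ J) 2 = 0 := by
  simp only [cnt, card_eq_zero, filter_eq_empty_iff]
  exact fun p _ => Fin.castSucc_ne_last (J p)

theorem prod_Amat'_eq_ite (α : ℝ) {N : ℕ} (J : Fin N → Fin 2) {L : Fin N → Fin 3}
    (hL : ∀ p, L p ≠ 2) :
    ∏ p, Amat' α (J p) (L p) = if L = Fin.castSucc ∘ J then 1 else 0 := by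
  simp only [Amat'_eq_ite α _ (hL _), Finset.prod_boole, mem_univ, true_implies, funext_iff,
    Function.comp_apply]

theorem Bmat_apply_of_no_twos (α : ℝ) {N : ℕ} (J : Fin N → Fin 2) {a b : ℕ} (h : a + b + 0 = N) :
    Bmat α N J ⟨(a, b, 0), h⟩ = if #{p | J p = 0} = a ∧ #{p | J p = 1} = b then 1 else 0 := by
  have hL : ∀ L ∈ ({L | cnt L 0 = a ∧ cnt L 1 = b ∧ cnt L 2 = 0} : Finset (Fin N → Fin 3)),
      ∀ p, L p ≠ 2 := by
    intro L hL p hp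
    simp only [mem_filter, mem_univ, true_and, true_implies, cnt, card_eq_zero,
      filter_eq_empty_iff] at hL
    exact hL.2.2 hp
  have h0 := cnt_castSucc_comp J 0
  have h1 := cnt_castSucc_comp J 1
  simp only [Fin.castSucc_zero, Fin.castSucc_one] at h0 h1
  unfold Bmat
  rw [Finset.sum_congr rfl fun L hL' => prod_Amat'_eq_ite α J (hL L hL'), Finset.sum_ite_eq']
  simp [h0, h1, cnt_castSucc_comp_two]

def noTwosTriple (N : ℕ) (m : Fin (N + 1)) : Triple N := ⟨(N - m, m, 0), Nat.sub_add_cancel (Nat.lt_succ_iff.mp m.isLt)⟩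

theorem Bmat_submatrix_eq_one (α : ℝ) (N : ℕ) :
    (Bmat α N).submatrix (fun k : Fin (N + 1) => onesPrefix N k) (noTwosTriple N) = 1 := by
  ext k m
  have hk : (k : ℕ) ≤ N := Nat.lt_succ_iff.mp k.isLt
  have h0 := card_fiber_zero_add_card_fiber_one (onesPrefix N k)
  rw [Fintype.card_fin, card_onesPrefix_eq_one hk] at h0
  rw [Matrix.submatrix_apply, noTwosTriple, Bmat_apply_of_no_twos, card_onesPrefix_eq_one hk,
    Matrix.one_apply]
  exact if_congr (by omega) rfl rfl

theorem B_rank_general (α : ℝ) (N : ℕ) : (Bmat α N).rank = N + 1 := by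
  apply le_antisymm
  · simpa using (Bmat α N).rank_le_card_of_forall_row_eq (fun k : Fin (N + 1) => onesPrefix N k)
      fun J => ⟨⟨#{p | J p = 1}, Nat.lt_succ_of_le ((card_filter_le _ _).trans_eq (card_fin N))⟩,
        Bmat_eq_onesPrefix α J⟩
  · simpa using (Bmat α N).card_le_rank_of_submatrix_eq_one _ _ (Bmat_submatrix_eq_one α N)

/-- The matrix `B_{α,N}` has rank `N + 1`. -/
theorem B_rank (α : ℝ) (N : ℕ) (hN : 1 ≤ N) : (Bmat α N).rank = N + 1 :=
  B_rank_general α N
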